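/- Let z ∈ ℝ^d and X = Σ_i z_i ε_i with ε_i i.i.d. Rademacher. Then E[X²] = ‖z‖₂², and hence E[|X|]² / E[X²] ≥ 1/2. -/

import Mathlib

open MeasureTheory ProbabilityTheory Finset
open scoped ENNReal

/-!
The vector `(ε i)` has the law of `x ↦ (boolSign (x i))` for `x` uniform on the Boolean cube, so
both moments are cube averages of functions of `S(x) = ∑ z i * boolSign (x i)`. Orthogonality of the
coordinate signs gives `E[S²] = ‖z‖²`. The function `|S|` is even, so its Walsh expansion lives on
even levels and Parseval yields `Var |S| ≤ ½ ∑ⱼ E[(Lⱼ|S|)²]`, where `Lⱼ` is half the change under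
flipping coordinate `j`; since that flip moves `S` by `2 |z j|`, the right side is at most `½ ‖z‖²`.
Hence `E[|S|]² = E[S²] - Var |S| ≥ ½ ‖z‖²`, which is Szarek's sharp constant.
-/

noncomputable def boolSign (b : Bool) : ℝ := if b then 1 else -1

lemma boolSign_mul_self (b : Bool) : boolSign b * boolSign b = 1 := by cases b <;> simp [boolSign]

lemma boolSign_not (b : Bool) : boolSign (!b) = -boolSign b := by cases b <;> simp [boolSign]

lemma abs_boolSign (b : Bool) : |boolSign b| = 1 := by cases b <;> simp [boolSign]

lemma measurable_boolSign : Measurable boolSign := measurable_of_finite _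

namespace BoolCube

variable {ι : Type*}

noncomputable def walsh (S : Finset ι) (x : ι → Bool) : ℝ := ∏ i ∈ S, boolSign (x i)

lemma walsh_not (S : Finset ι) (x : ι → Bool) :
    walsh S (fun i => !x i) = (-1) ^ S.card * walsh S x := by
  simp only [walsh, boolSign_not, neg_eq_neg_one_mul (boolSign _), prod_mul_distrib, prod_const]

noncomputable def signSum [Fintype ι] (z : ι → ℝ) (x : ι → Bool) : ℝ := ∑ i, z i * boolSign (x i)

lemma signSum_not [Fintype ι] (z : ι → ℝ) (x : ι → Bool) :
    signSum z (fun i => !x i) = -signSum z x := by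
  simp [signSum, boolSign_not, sum_neg_distrib]

variable [DecidableEq ι]

def flipAt (j : ι) (x : ι → Bool) : ι → Bool := Function.update x j (!x j)

@[simp] lemma flipAt_apply_self (j : ι) (x : ι → Bool) : flipAt j x j = !x j := by
  simp [flipAt]

lemma flipAt_apply_of_ne {i j : ι} (h : i ≠ j) (x : ι → Bool) : flipAt j x i = x i := by
  simp [flipAt, h]

lemma flipAt_involutive (j : ι) : Function.Involutive (flipAt j) := by
  intro x
  ext i
  by_cases h : i = j
  · subst h; simp
  · simp [flipAt_apply_of_ne h]

lemma walsh_flipAt (S : Finset ι) (j : ι) (x : ι → Bool) :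
    walsh S (flipAt j x) = if j ∈ S then -walsh S x else walsh S x := by
  have hrest : ∀ i ∈ S.erase j, boolSign (flipAt j x i) = boolSign (x i) := fun i hi => by
    rw [flipAt_apply_of_ne (ne_of_mem_erase hi)]
  split_ifs with hj
  · rw [walsh, walsh, ← mul_prod_erase S _ hj, ← mul_prod_erase S _ hj, prod_congr rfl hrest,
      flipAt_apply_self, boolSign_not, neg_mul]
  · exact prod_congr rfl fun i hi => by rw [flipAt_apply_of_ne (ne_of_mem_of_not_mem hi hj)]

variable [Fintype ι]

lemma sum_comp_flipAt (j : ι) (g : (ι → Bool) → ℝ) :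
    ∑ x, g (flipAt j x) = ∑ x, g x :=
  Fintype.sum_equiv (flipAt_involutive j).toPerm _ _ fun _ => rfl

lemma sum_comp_not (g : (ι → Bool) → ℝ) :
    ∑ x : ι → Bool, g (fun i => !x i) = ∑ x, g x :=
  Fintype.sum_equiv (Function.Involutive.toPerm _ fun x => funext fun i => Bool.not_not (x i))
    _ _ fun _ => rfl

lemma sum_eq_zero_of_flipAt_eq_neg (j : ι) {g : (ι → Bool) → ℝ}
    (hg : ∀ x, g (flipAt j x) = -g x) : ∑ x, g x = 0 := by
  have h := sum_comp_flipAt j g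
  simp only [hg, sum_neg_distrib] at h
  linarith

noncomputable def walshCoeff (f : (ι → Bool) → ℝ) (S : Finset ι) : ℝ := ∑ x, f x * walsh S x

lemma sum_walsh_mul_walsh (x y : ι → Bool) :
    ∑ S : Finset ι, walsh S x * walsh S y = if x = y then 2 ^ Fintype.card ι else 0 := by
  have hprod : ∑ S : Finset ι, walsh S x * walsh S y =
      ∏ i, (boolSign (x i) * boolSign (y i) + 1) := by
    simp only [walsh, ← prod_mul_distrib, prod_add, prod_const_one, mul_one, powerset_univ]
  rw [hprod]
  split_ifs with hxy
  · simp [hxy, boolSign_mul_self, one_add_one_eq_two]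
  · obtain ⟨i, hi⟩ := Function.ne_iff.mp hxy
    refine prod_eq_zero (mem_univ i) ?_
    cases hx : x i <;> cases hy : y i <;> simp_all [boolSign]

theorem sum_sq_walshCoeff (f : (ι → Bool) → ℝ) :
    ∑ S, walshCoeff f S ^ 2 = 2 ^ Fintype.card ι * ∑ x, f x ^ 2 := by
  have hsq : ∀ S, walshCoeff f S ^ 2 = ∑ x, ∑ y, f x * f y * (walsh S x * walsh S y) := by
    intro S
    rw [sq, walshCoeff, sum_mul_sum]
    exact sum_congr rfl fun x _ => sum_congr rfl fun y _ => by ring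
  calc ∑ S, walshCoeff f S ^ 2
      = ∑ x, ∑ y, f x * f y * ∑ S : Finset ι, walsh S x * walsh S y := by
        simp only [hsq, mul_sum]
        rw [sum_comm]
        exact sum_congr rfl fun x _ => sum_comm
    _ = 2 ^ Fintype.card ι * ∑ x, f x ^ 2 := by
        simp [sum_walsh_mul_walsh, mul_sum, sq, mul_comm]

lemma walshCoeff_eq_zero_of_odd {f : (ι → Bool) → ℝ} (hf : ∀ x, f (fun i => !x i) = f x)
    {S : Finset ι} (hS : Odd S.card) : walshCoeff f S = 0 := by
  have h := sum_comp_not fun x => f x * walsh S x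
  simp only [hf, walsh_not, hS.neg_one_pow, neg_one_mul, mul_neg, sum_neg_distrib] at h
  rw [walshCoeff]
  linarith

noncomputable def flipDiff (j : ι) (f : (ι → Bool) → ℝ) (x : ι → Bool) : ℝ :=
  (f x - f (flipAt j x)) / 2

lemma sum_comp_flipAt_mul_walsh (j : ι) (f : (ι → Bool) → ℝ) (S : Finset ι) :
    ∑ x, f (flipAt j x) * walsh S x = if j ∈ S then -walshCoeff f S else walshCoeff f S := by
  rw [← sum_comp_flipAt j]
  simp only [flipAt_involutive j _, walsh_flipAt]
  split_ifs <;> simp [walshCoeff]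

lemma walshCoeff_flipDiff (j : ι) (f : (ι → Bool) → ℝ) (S : Finset ι) :
    walshCoeff (flipDiff j f) S = if j ∈ S then walshCoeff f S else 0 := by
  have h : walshCoeff (flipDiff j f) S =
      (walshCoeff f S - ∑ x, f (flipAt j x) * walsh S x) / 2 := by
    simp only [walshCoeff, flipDiff, sub_div, sub_mul, sum_sub_distrib, div_mul_eq_mul_div,
      ← sum_div]
  rw [h, sum_comp_flipAt_mul_walsh]
  split_ifs <;> ring

theorem sum_card_mul_sq_walshCoeff (f : (ι → Bool) → ℝ) :
    ∑ S, (S.card : ℝ) * walshCoeff f S ^ 2 =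
      2 ^ Fintype.card ι * ∑ j, ∑ x, flipDiff j f x ^ 2 := by
  calc ∑ S, (S.card : ℝ) * walshCoeff f S ^ 2
      = ∑ j, ∑ S, walshCoeff (flipDiff j f) S ^ 2 := by
        simp only [walshCoeff_flipDiff, ite_pow, zero_pow two_ne_zero]
        rw [sum_comm]
        refine sum_congr rfl fun S _ => ?_
        rw [sum_ite_mem, univ_inter, sum_const, nsmul_eq_mul]
    _ = 2 ^ Fintype.card ι * ∑ j, ∑ x, flipDiff j f x ^ 2 := by
        simp only [sum_sq_walshCoeff, mul_sum]

lemma sq_walshCoeff_le_of_even {f : (ι → Bool) → ℝ} (hf : ∀ x, f (fun i => !x i) = f x)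
    {S : Finset ι} (hS : S ≠ ∅) : walshCoeff f S ^ 2 ≤ S.card * walshCoeff f S ^ 2 / 2 := by
  rcases Nat.even_or_odd S.card with hev | hodd
  · have hcard : (2 : ℝ) ≤ S.card := by
      have : S.card ≠ 0 := card_ne_zero.mpr (nonempty_iff_ne_empty.mpr hS)
      obtain ⟨k, hk⟩ := hev
      exact_mod_cast (by omega : 2 ≤ S.card)
    nlinarith [sq_nonneg (walshCoeff f S)]
  · simp [walshCoeff_eq_zero_of_odd hf hodd]

/-- Poincaré inequality for even functions: these have no Walsh mass on level one, so the
level-weighted Parseval identity controls the non-constant part with a factor `1/2`. -/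
theorem variance_le_half_sum_flipDiff_of_even {f : (ι → Bool) → ℝ}
    (hf : ∀ x, f (fun i => !x i) = f x) :
    2 ^ Fintype.card ι * ∑ x, f x ^ 2 - (∑ x, f x) ^ 2 ≤
      2 ^ Fintype.card ι / 2 * ∑ j, ∑ x, flipDiff j f x ^ 2 := by
  have hempty : walshCoeff f ∅ = ∑ x, f x := by simp [walshCoeff, walsh]
  have hparseval := sum_sq_walshCoeff f
  rw [← add_sum_erase _ _ (mem_univ ∅), hempty] at hparseval
  have hlevel : ∑ S, (S.card : ℝ) * walshCoeff f S ^ 2 =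
      ∑ S ∈ univ.erase ∅, (S.card : ℝ) * walshCoeff f S ^ 2 :=
    (sum_erase univ (by simp)).symm
  have hhigh : ∑ S ∈ univ.erase ∅, walshCoeff f S ^ 2 ≤
      ∑ S ∈ univ.erase ∅, (S.card : ℝ) * walshCoeff f S ^ 2 / 2 :=
    sum_le_sum fun S hS => sq_walshCoeff_le_of_even hf (ne_of_mem_erase hS)
  rw [← sum_div, ← hlevel, sum_card_mul_sq_walshCoeff] at hhigh
  linarith

lemma sum_boolSign_mul_boolSign (i j : ι) :
    ∑ x : ι → Bool, boolSign (x i) * boolSign (x j) =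
      if i = j then 2 ^ Fintype.card ι else 0 := by
  split_ifs with hij
  · simp [hij, boolSign_mul_self]
  · refine sum_eq_zero_of_flipAt_eq_neg i fun x => ?_
    rw [flipAt_apply_self, flipAt_apply_of_ne (Ne.symm hij), boolSign_not, neg_mul]

theorem sum_signSum_sq (z : ι → ℝ) :
    ∑ x, signSum z x ^ 2 = 2 ^ Fintype.card ι * ∑ i, z i ^ 2 := by
  have hsq : ∀ x, signSum z x ^ 2 =
      ∑ i, ∑ j, z i * z j * (boolSign (x i) * boolSign (x j)) := by
    intro x
    rw [sq, signSum, sum_mul_sum]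
    exact sum_congr rfl fun i _ => sum_congr rfl fun j _ => by ring
  calc ∑ x, signSum z x ^ 2
      = ∑ i, ∑ j, z i * z j * ∑ x : ι → Bool, boolSign (x i) * boolSign (x j) := by
        simp only [hsq, mul_sum]
        rw [sum_comm]
        exact sum_congr rfl fun i _ => sum_comm
    _ = 2 ^ Fintype.card ι * ∑ i, z i ^ 2 := by
        simp [sum_boolSign_mul_boolSign, mul_sum, sq, mul_comm]

lemma signSum_sub_signSum_flipAt (z : ι → ℝ) (j : ι) (x : ι → Bool) :
    signSum z x - signSum z (flipAt j x) = 2 * (z j * boolSign (x j)) := by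
  rw [signSum, signSum, ← sum_sub_distrib, sum_eq_single j]
  · rw [flipAt_apply_self, boolSign_not]; ring
  · intro i _ hij; rw [flipAt_apply_of_ne hij, sub_self]
  · simp

lemma sq_flipDiff_abs_signSum_le (z : ι → ℝ) (j : ι) (x : ι → Bool) :
    flipDiff j (fun x => |signSum z x|) x ^ 2 ≤ z j ^ 2 := by
  have h : |flipDiff j (fun x => |signSum z x|) x| ≤ |z j| := by
    calc |flipDiff j (fun x => |signSum z x|) x|
        = |(|signSum z x| - |signSum z (flipAt j x)|)| / 2 := by simp [flipDiff, abs_div]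
      _ ≤ |signSum z x - signSum z (flipAt j x)| / 2 :=
        div_le_div_of_nonneg_right (abs_abs_sub_abs_le_abs_sub _ _) zero_le_two
      _ = |z j| := by
        rw [signSum_sub_signSum_flipAt, abs_mul, abs_mul, abs_boolSign]; simp
  exact sq_le_sq.mpr h

theorem sum_abs_signSum_sq_ge (z : ι → ℝ) :
    (2 ^ Fintype.card ι) ^ 2 / 2 * ∑ i, z i ^ 2 ≤ (∑ x, |signSum z x|) ^ 2 := by
  have hpoincare := variance_le_half_sum_flipDiff_of_even (f := fun x => |signSum z x|)
    fun x => by rw [signSum_not, abs_neg]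
  have hflip : ∑ j, ∑ x, flipDiff j (fun x => |signSum z x|) x ^ 2 ≤
      2 ^ Fintype.card ι * ∑ j, z j ^ 2 := by
    rw [mul_sum]
    refine sum_le_sum fun j _ => ?_
    calc ∑ x, flipDiff j (fun x => |signSum z x|) x ^ 2 ≤ ∑ _x : ι → Bool, z j ^ 2 :=
          sum_le_sum fun x _ => sq_flipDiff_abs_signSum_le z j x
      _ = 2 ^ Fintype.card ι * z j ^ 2 := by simp
  simp only [sq_abs, sum_signSum_sq] at hpoincare
  have hN : (0 : ℝ) ≤ 2 ^ Fintype.card ι / 2 := by positivity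
  nlinarith [mul_le_mul_of_nonneg_left hflip hN]

end BoolCube

noncomputable def uniformBool : Measure Bool :=
  (1/2 : ℝ≥0∞) • Measure.dirac true + (1/2 : ℝ≥0∞) • Measure.dirac false

instance : IsProbabilityMeasure uniformBool :=
  ⟨by simp [uniformBool, ENNReal.inv_two_add_inv_two]⟩

lemma map_boolSign_uniformBool :
    uniformBool.map boolSign =
      (1/2 : ℝ≥0∞) • Measure.dirac (1 : ℝ) + (1/2 : ℝ≥0∞) • Measure.dirac (-1 : ℝ) := by
  simp [uniformBool, Measure.map_add _ _ measurable_boolSign, Measure.map_smul,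
    Measure.map_dirac' measurable_boolSign, boolSign]

lemma measureReal_pi_uniformBool {ι : Type*} [Fintype ι] (x : ι → Bool) :
    (Measure.pi fun _ : ι => uniformBool).real {x} = (2 ^ Fintype.card ι)⁻¹ := by
  have : ∀ b, uniformBool {b} = 2⁻¹ := by
    intro b; cases b <;> simp [uniformBool]
  simp [measureReal_def, Measure.pi_singleton, this]

theorem integral_comp_eq_sum_boolSign {Ω ι : Type*} [MeasurableSpace Ω] {μ : Measure Ω}
    [IsProbabilityMeasure μ] [Fintype ι] [DecidableEq ι] {ε : ι → Ω → ℝ}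
    (hmeas : ∀ i, Measurable (ε i)) (hindep : iIndepFun ε μ)
    (hrad : ∀ i, μ.map (ε i) =
      (1/2 : ℝ≥0∞) • Measure.dirac (1 : ℝ) + (1/2 : ℝ≥0∞) • Measure.dirac (-1 : ℝ))
    {g : (ι → ℝ) → ℝ} (hg : Measurable g) :
    ∫ ω, g (fun i => ε i ω) ∂μ =
      (∑ x : ι → Bool, g (fun i => boolSign (x i))) / 2 ^ Fintype.card ι := by
  have hlaw : μ.map (fun ω i => ε i ω) =
      (Measure.pi fun _ : ι => uniformBool).map (fun x i => boolSign (x i)) := by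
    rw [(iIndepFun_iff_map_fun_eq_pi_map fun i => (hmeas i).aemeasurable).mp hindep,
      Measure.pi_map_pi fun _ => measurable_boolSign.aemeasurable]
    simp only [hrad, map_boolSign_uniformBool]
  rw [← integral_map (measurable_pi_lambda _ hmeas).aemeasurable hg.aestronglyMeasurable, hlaw,
    integral_map (measurable_of_finite _).aemeasurable hg.aestronglyMeasurable,
    integral_fintype .of_finite]
  simp [measureReal_pi_uniformBool, Finset.mul_sum, div_eq_inv_mul]

theorem integral_comp_sum_mul_eq_sum_signSum {Ω ι : Type*} [MeasurableSpace Ω] {μ : Measure Ω}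
    [IsProbabilityMeasure μ] [Fintype ι] [DecidableEq ι] {ε : ι → Ω → ℝ}
    (hmeas : ∀ i, Measurable (ε i)) (hindep : iIndepFun ε μ)
    (hrad : ∀ i, μ.map (ε i) =
      (1/2 : ℝ≥0∞) • Measure.dirac (1 : ℝ) + (1/2 : ℝ≥0∞) • Measure.dirac (-1 : ℝ))
    {φ : ℝ → ℝ} (hφ : Measurable φ) (z : ι → ℝ) :
    ∫ ω, φ (∑ i, z i * ε i ω) ∂μ =
      (∑ x, φ (BoolCube.signSum z x)) / 2 ^ Fintype.card ι :=
  integral_comp_eq_sum_boolSign hmeas hindep hrad (g := fun v => φ (∑ i, z i * v i)) (by fun_prop)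

/-- For i.i.d. Rademacher `ε i` and `z ≠ 0`: `E[X²] = ‖z‖₂²` where `X = Σ z_i ε_i`,
and hence `E[|X|]²/E[X²] ≥ 1/2`. -/
theorem rademacher_second_moment_ratio {Ω : Type*} [MeasurableSpace Ω] (μ : Measure Ω)
    [IsProbabilityMeasure μ] (d : ℕ) (ε : Fin d → Ω → ℝ)
    (hmeas : ∀ i, Measurable (ε i))
    (hindep : iIndepFun ε μ)
    (hrad : ∀ i, Measure.map (ε i) μ =
      (1/2 : ENNReal) • Measure.dirac (1 : ℝ) + (1/2 : ENNReal) • Measure.dirac (-1 : ℝ))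
    (z : Fin d → ℝ) (hz : z ≠ 0) :
    (∫ ω, (∑ i, z i * ε i ω) ^ 2 ∂μ) = ∑ i, (z i) ^ 2 ∧
      (∫ ω, |∑ i, z i * ε i ω| ∂μ) ^ 2 / (∫ ω, (∑ i, z i * ε i ω) ^ 2 ∂μ) ≥ 1/2 := by
  have hsecond : ∫ ω, (∑ i, z i * ε i ω) ^ 2 ∂μ = ∑ i, z i ^ 2 := by
    rw [integral_comp_sum_mul_eq_sum_signSum hmeas hindep hrad (φ := (· ^ 2)) (by fun_prop) z,
      BoolCube.sum_signSum_sq]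
    field_simp
  have hpos : 0 < ∑ i, z i ^ 2 := by
    obtain ⟨i, hi⟩ := Function.ne_iff.mp hz
    exact sum_pos' (fun i _ => sq_nonneg (z i)) ⟨i, mem_univ i, pow_two_pos_of_ne_zero hi⟩
  refine ⟨hsecond, ?_⟩
  rw [hsecond, integral_comp_sum_mul_eq_sum_signSum hmeas hindep hrad measurable_abs z, div_pow,
    ge_iff_le, le_div_iff₀ hpos, le_div_iff₀ (by positivity)]
  have hkhintchine := BoolCube.sum_abs_signSum_sq_ge z
  rw [Fintype.card_fin] at hkhintchine ⊢
  linarith
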